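/- arXiv:1503.01945 — 2 statements merged into one kernel-verified Lean document; each statement's English description precedes it below -/
import Mathlib

section
/- Let h: (0,∞) → (0,∞) be a C¹ function satisfying the differential inequality h^{(n+2)/n}(t) · B^{-2/n} ≤ −(C/2) h′(t) + 2C c₁² h(t) for constants B, C, c₁ > 0, with h(t) → ∞ as t → 0⁺. Then for all t > 0, h(t) ≤ (2C)^{n/2} c₁ⁿ (1 − e^{-8tc₁²/n})^{-n/2} B. -/
/-!
Substituting `φ = h ^ (-2/n)` turns the differential inequality into the linear one
`φ' + a φ ≥ k` with `a = 8 c₁² / n` and `k = 4 B^{-2/n} / (C n)`. Hence `e^{a t} (φ t - k / a)`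
is nondecreasing; since `h → ∞` forces `φ → 0` at `0⁺`, this gives
`φ t ≥ (k / a) (1 - e^{-a t})`, and raising to the power `-n/2` yields the bound on `h`.
-/

open Filter Set Real Topology

section LinearComparison

variable {φ φ' : ℝ → ℝ} {a k : ℝ}

lemma monotoneOn_exp_mul_sub_div_of_le_deriv_add (ha : a ≠ 0)
    (hφ : ∀ s, 0 < s → HasDerivAt φ (φ' s) s) (hk : ∀ s, 0 < s → k ≤ φ' s + a * φ s) :
    MonotoneOn (fun s => exp (a * s) * (φ s - k / a)) (Ioi 0) := by
  have hF : ∀ s, 0 < s → HasDerivAt (fun s => exp (a * s) * (φ s - k / a))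
      (exp (a * s) * (φ' s + a * φ s - k)) s := by
    intro s hs
    have hexp : HasDerivAt (fun u => exp (a * u)) (exp (a * s) * a) s := by
      simpa using ((hasDerivAt_id s).const_mul a).exp
    exact (hexp.mul ((hφ s hs).sub_const (k / a))).congr_deriv (by field_simp; ring)
  refine monotoneOn_of_hasDerivWithinAt_nonneg (convex_Ioi 0)
    (f' := fun s => exp (a * s) * (φ' s + a * φ s - k))
    (fun s hs => (hF s hs).continuousAt.continuousWithinAt) ?_ ?_
  · intro s hs
    rw [interior_Ioi] at hs ⊢
    exact (hF s hs).hasDerivWithinAt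
  · intro s hs
    rw [interior_Ioi] at hs
    exact mul_nonneg (exp_pos _).le (by linarith [hk s hs])

lemma div_mul_one_sub_exp_le_of_le_deriv_add (ha : a ≠ 0)
    (hφ : ∀ s, 0 < s → HasDerivAt φ (φ' s) s) (hk : ∀ s, 0 < s → k ≤ φ' s + a * φ s)
    (hφ0 : Tendsto φ (𝓝[>] 0) (𝓝 0)) {t : ℝ} (ht : 0 < t) :
    k / a * (1 - exp (-(a * t))) ≤ φ t := by
  have hlim : Tendsto (fun s => exp (a * s) * (φ s - k / a)) (𝓝[>] 0)
      (𝓝 (exp (a * 0) * (0 - k / a))) :=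
    (((continuous_const.mul continuous_id).rexp.tendsto 0).mono_left nhdsWithin_le_nhds).mul
      (hφ0.sub_const _)
  have hFt : -(k / a) ≤ exp (a * t) * (φ t - k / a) := by
    simpa using le_of_tendsto hlim <| by
      filter_upwards [Ioo_mem_nhdsGT ht] with s hs
      exact monotoneOn_exp_mul_sub_div_of_le_deriv_add ha hφ hk hs.1 ht hs.2.le
  have hinv : exp (-(a * t)) * exp (a * t) = 1 := by rw [← exp_add]; simp
  calc k / a * (1 - exp (-(a * t))) = k / a + exp (-(a * t)) * -(k / a) := by ring
    _ ≤ k / a + exp (-(a * t)) * (exp (a * t) * (φ t - k / a)) := by gcongr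
    _ = φ t := by rw [← mul_assoc, hinv]; ring

end LinearComparison

lemma le_deriv_rpow_neg_two_div_add_of_rpow_mul_le {n C c β H D : ℝ} (hn : 0 < n) (hC : 0 < C)
    (hH : 0 < H) (hineq : H ^ ((n + 2) / n) * β ≤ -(C / 2) * D + 2 * C * c ^ 2 * H) :
    4 * β / (C * n) ≤ D * (-2 / n) * H ^ (-2 / n - 1) + 8 * c ^ 2 / n * H ^ (-2 / n) := by
  set r := H ^ (-2 / n - 1)
  have hr : 0 < r := rpow_pos_of_pos hH _
  have hr_mul_rpow : r * H ^ ((n + 2) / n) = 1 := by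
    rw [← rpow_add hH, show -2 / n - 1 + (n + 2) / n = 0 by field_simp; ring, rpow_zero]
  have hr_mul : r * H = H ^ (-2 / n) := by
    rw [← rpow_add_one hH.ne', sub_add_cancel]
  calc 4 * β / (C * n) = 4 / (C * n) * r * (H ^ ((n + 2) / n) * β) := by
        rw [mul_assoc _ r, ← mul_assoc r, hr_mul_rpow]; ring
    _ ≤ 4 / (C * n) * r * (-(C / 2) * D + 2 * C * c ^ 2 * H) := by gcongr
    _ = D * (-2 / n) * r + 8 * c ^ 2 / n * (r * H) := by field_simp; ring
    _ = D * (-2 / n) * r + 8 * c ^ 2 / n * H ^ (-2 / n) := by rw [hr_mul]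

lemma rpow_neg_two_div_div_rpow_neg_div_two {n B C c : ℝ} (hn : n ≠ 0) (hB : 0 < B)
    (hC : 0 < C) (hc : 0 < c) :
    (B ^ (-2 / n) / (2 * C * c ^ 2)) ^ (-n / 2) = (2 * C) ^ (n / 2) * c ^ n * B := by
  have hB' : (B ^ (-2 / n)) ^ (-n / 2) = B := by
    rw [← rpow_mul hB.le, show -2 / n * (-n / 2) = 1 by field_simp, rpow_one]
  have hc' : (c ^ 2) ^ (n / 2) = c ^ n := by
    rw [← rpow_natCast, ← rpow_mul hc.le]; push_cast; ring_nf
  rw [div_rpow (by positivity) (by positivity), hB', neg_div, rpow_neg (by positivity),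
    mul_rpow (by positivity) (by positivity), hc']
  field_simp

/-- ODE comparison step of the heat-kernel index estimate.
If h : (0,∞) → (0,∞) is C¹ with
h^{(n+2)/n}(t) B^{-2/n} ≤ −(C/2) h′(t) + 2C c₁² h(t) for constants B, C, c₁ > 0 and
h(t) → ∞ as t → 0⁺, then h(t) ≤ (2C)^{n/2} c₁ⁿ (1 − e^{−8tc₁²/n})^{−n/2} B for all
t > 0. -/
theorem heat_kernel_ode_comparison
    (n : ℕ) (hn : 1 ≤ n) (B C c₁ : ℝ) (hB : 0 < B) (hC : 0 < C) (hc₁ : 0 < c₁)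
    (h h' : ℝ → ℝ) (hpos : ∀ t, 0 < t → 0 < h t)
    (hderiv : ∀ t, 0 < t → HasDerivAt h (h' t) t)
    (hineq : ∀ t, 0 < t →
      h t ^ (((n : ℝ) + 2) / n) * B ^ (-(2 : ℝ) / n) ≤
        -(C / 2) * h' t + 2 * C * c₁ ^ 2 * h t)
    (hblow : Tendsto h (nhdsWithin 0 (Ioi 0)) atTop) :
    ∀ t, 0 < t →
      h t ≤ (2 * C) ^ ((n : ℝ) / 2) * c₁ ^ n *
        (1 - Real.exp (-8 * t * c₁ ^ 2 / n)) ^ (-(n : ℝ) / 2) * B := by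
  intro t ht
  have hn₀ : (0 : ℝ) < n := by exact_mod_cast hn
  set a := 8 * c₁ ^ 2 / n
  set k := 4 * B ^ (-(2 : ℝ) / n) / (C * n)
  have hφ0 : Tendsto (fun s => h s ^ (-(2 : ℝ) / n)) (𝓝[>] 0) (𝓝 0) := by
    simpa [neg_div, Function.comp_def] using
      (tendsto_rpow_neg_atTop (by positivity : (0 : ℝ) < 2 / n)).comp hblow
  have hlow : k / a * (1 - exp (-(a * t))) ≤ h t ^ (-(2 : ℝ) / n) :=
    div_mul_one_sub_exp_le_of_le_deriv_add (by positivity)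
      (fun s hs => (hderiv s hs).rpow_const (Or.inl (hpos s hs).ne'))
      (fun s hs => le_deriv_rpow_neg_two_div_add_of_rpow_mul_le hn₀ hC (hpos s hs) (hineq s hs))
      hφ0 ht
  have hka : k / a = B ^ (-(2 : ℝ) / n) / (2 * C * c₁ ^ 2) := by
    simp only [k, a]; field_simp; ring
  have hexp : -(a * t) = -8 * t * c₁ ^ 2 / n := by ring
  have hgap : 0 < 1 - exp (-(a * t)) := by
    rw [sub_pos, exp_lt_one_iff, neg_lt_zero]; positivity
  calc h t = (h t ^ (-(2 : ℝ) / n)) ^ (-(n : ℝ) / 2) := by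
        rw [← rpow_mul (hpos t ht).le, show -(2 : ℝ) / n * (-n / 2) = 1 by field_simp, rpow_one]
    _ ≤ (k / a * (1 - exp (-(a * t)))) ^ (-(n : ℝ) / 2) :=
        rpow_le_rpow_of_nonpos (by positivity) hlow (by linarith)
    _ = _ := by
        rw [mul_rpow (by positivity) hgap.le, hka,
          rpow_neg_two_div_div_rpow_neg_div_two hn₀.ne' hB hC hc₁, rpow_natCast, hexp]
        ring
end

section
/- Let Σ be a surface with metric g, Gaussian curvature K, and let u > 0 be smooth with Δu − (1/3)Ku + Vu = 0 on an open set U ⊂ Σ. Then the Gaussian curvature K̂ of the conformal metric ĝ = u⁶ g on U satisfies K̂ = 3u^{-6} ( V + |∇ log u|² ). In particular V ≥ 0 on U implies K̂ ≥ 0 on U. -/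
theorem curvature_term_eq_of_jacobi {K u V lapu gradlogu2 : ℝ} (hu : u ≠ 0)
    (hPDE : lapu - (1 / 3) * K * u + V * u = 0) :
    K - 3 * (lapu / u - gradlogu2) = 3 * (V + gradlogu2) := by
  have hlap : lapu / u = (1 / 3) * K - V := by
    field_simp
    linarith
  rw [hlap]
  ring

/-- Let Σ be a surface with metric g, Gaussian curvature K, and u > 0
smooth with Δu − (1/3)Ku + Vu = 0 on an open set U.  Then the Gaussian curvature K̂
of ĝ = u⁶ g on U satisfies K̂ = 3u^{-6}(V + |∇ log u|²); in particular V ≥ 0 on U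
implies K̂ ≥ 0 on U.
Here, on the surface `S`: `lapu = Δu`, `gradlogu2 = |∇ log u|²` (which is ≥ 0), and
the hypotheses are the 2-dimensional conformal Gauss curvature law
K̂ = u^{-6}(K − 3 Δ log u) combined with the chain rule
Δ log u = Δu/u − |∇ log u|², together with the equation Lu = 0 on U. -/
theorem conformal_gauss_curvature_of_jacobi_function
    {S : Type*} (U : Set S) (K Khat u V lapu gradlogu2 : S → ℝ)
    (hu : ∀ x, 0 < u x)
    (hglog : ∀ x, 0 ≤ gradlogu2 x)
    (hconf : ∀ x ∈ U, Khat x =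
      u x ^ (-6 : ℤ) * (K x - 3 * (lapu x / u x - gradlogu2 x)))
    (hPDE : ∀ x ∈ U, lapu x - (1 / 3) * K x * u x + V x * u x = 0) :
    (∀ x ∈ U, Khat x = 3 * u x ^ (-6 : ℤ) * (V x + gradlogu2 x)) ∧
      ((∀ x ∈ U, 0 ≤ V x) → ∀ x ∈ U, 0 ≤ Khat x) := by
  have hKhat : ∀ x ∈ U, Khat x = 3 * u x ^ (-6 : ℤ) * (V x + gradlogu2 x) := by
    intro x hx
    rw [hconf x hx, curvature_term_eq_of_jacobi (hu x).ne' (hPDE x hx)]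
    ring
  refine ⟨hKhat, fun hV x hx => ?_⟩
  rw [hKhat x hx]
  exact mul_nonneg (by positivity) (add_nonneg (hV x hx) (hglog x))
end
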